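/- arXiv:2011.08643 — 2 statements merged into one kernel-verified Lean document; each statement's English description precedes it below -/
import Mathlib

section
/- For any s-core σ, there is at most one self-conjugate partition with s-core σ and s-weight 1. -/
/-- A partition, given as a weakly decreasing finitely-supported sequence of
natural numbers (`parts 0` is the first part). -/
structure SeqPartition where
  parts : ℕ →₀ ℕ
  antitone : ∀ ⦃i j : ℕ⦄, i ≤ j → parts j ≤ parts i

namespace SeqPartition

/-- The size `|λ|` of a partition. -/
def size (l : SeqPartition) : ℕ := l.parts.sum fun _ v => v

/-- The beta-set `β(λ) = { λ_r − r : r ≥ 1 }` (here 0-indexed). -/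
def betaSet (l : SeqPartition) : Set ℤ :=
  Set.range fun r : ℕ => (l.parts r : ℤ) - (r + 1)

/-- `RemoveHook h l m` : `m` is obtained from `l` by removing a rim `h`-hook;
in beta-set terms, an element `b` of `β(l)` is replaced by `b − h ∉ β(l)`. -/
def RemoveHook (h : ℕ) (l m : SeqPartition) : Prop :=
  ∃ b : ℤ, b ∈ l.betaSet ∧ b - (h : ℤ) ∉ l.betaSet ∧
    m.betaSet = insert (b - (h : ℤ)) (l.betaSet \ {b})

/-- `l` is an `s`-core: no rim `s`-hook can be removed. -/
def IsCore (s : ℕ) (l : SeqPartition) : Prop := ∀ m : SeqPartition, ¬ RemoveHook s l m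

/-- `c` is the `s`-core of `l`: it is obtained from `l` by repeatedly removing
rim `s`-hooks, and is itself an `s`-core. -/
def HasCore (s : ℕ) (l c : SeqPartition) : Prop :=
  Relation.ReflTransGen (RemoveHook s) l c ∧ IsCore s c

/-- `IsConj l m` : `m` is the conjugate partition of `l`. -/
def IsConj (l m : SeqPartition) : Prop :=
  ∀ r : ℕ, m.parts r = Set.ncard {c : ℕ | r + 1 ≤ l.parts c}

end SeqPartition

/-- The region `U_x = { x + as + bt : a, b > 0 }`. -/
def UpSet (s t : ℕ) (x : ℤ) : Set ℤ :=
  {n : ℤ | ∃ a b : ℕ, 0 < a ∧ 0 < b ∧ n = x + (a : ℤ) * s + (b : ℤ) * t}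

/-- The region `L_x = { x − as − bt : a, b ≥ 0 }`. -/
def LowSet (s t : ℕ) (x : ℤ) : Set ℤ :=
  {n : ℤ | ∃ a b : ℕ, n = x - (a : ℤ) * s - (b : ℤ) * t}

/-- `x` is a pinch-point for `l` : `L_x ⊆ β(l)` and `β(l) ∩ U_x = ∅`. -/
def PinchPoint (s t : ℕ) (x : ℤ) (l : SeqPartition) : Prop :=
  LowSet s t x ⊆ l.betaSet ∧ l.betaSet ∩ UpSet s t x = ∅

/-- The generator `w_i` of the affine symmetric group `W_s` in its level-`t`
action on `ℤ` : `n ↦ n + t` if `n ≡ (i−1)t − (s−1)(t−1)/2 (mod s)`,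
`n ↦ n − t` if `n ≡ it − (s−1)(t−1)/2 (mod s)`, and `n ↦ n` otherwise. -/
def wgen (s t : ℕ) (i : ℤ) : ℤ → ℤ := fun n =>
  if (s : ℤ) ∣ (n + ((s : ℤ) - 1) * ((t : ℤ) - 1) / 2 - (i - 1) * t) then n + t
  else if (s : ℤ) ∣ (n + ((s : ℤ) - 1) * ((t : ℤ) - 1) / 2 - i * t) then n - t
  else n

/-- The monoid of maps `ℤ → ℤ` generated by the `wgen s t i`.  Since each
generator is an involution, this is the image of the level-`t` action
of the affine symmetric group `W_s` on `ℤ`. -/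
def WMon (s t : ℕ) : Submonoid (Function.End ℤ) :=
  Submonoid.closure {f | ∃ i : ℤ, f = wgen s t i}

/-- `l` is `(s,t)`-minimal: no partition of smaller size has the same
`s`-core and `t`-core. -/
def MinimalPart (s t : ℕ) (l : SeqPartition) : Prop :=
  ∀ (m σ τ : SeqPartition), SeqPartition.HasCore s l σ → SeqPartition.HasCore t l τ →
    SeqPartition.HasCore s m σ → SeqPartition.HasCore t m τ → l.size ≤ m.size

/-!
Work with beta-sets `β(λ) = {λ_r - r - 1}`. Removing a rim `s`-hook replaces some `b ∈ β(λ)` by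
`b - s ∉ β(λ)` and lowers the size by exactly `s`, so a partition of `s`-weight one is recovered
from its core `σ` and the single position `b`: `β(λ) = β(σ) - {b - s} + {b}`.
Conjugation acts on beta-sets by `x ↦ -1 - x` followed by complementation, so for self-conjugate
`λ` exactly one point of each pair `{x, -1 - x}` lies in `β(λ)`. Then `b` can be read off `β(σ)`:
if `2b = s - 1` it is forced; otherwise `{b, -1 - b}` is the only pair that `β(σ)` misses entirely
and `{b - s, s - 1 - b}` the only pair it contains entirely, and these determine `b` since `s ≠ 0`.
-/

theorem Nat.lt_ncard_setOf_iff {p : ℕ → Prop} (hp : ∀ ⦃i j⦄, i ≤ j → p j → p i)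
    (hfin : {c | p c}.Finite) (c : ℕ) : c < {c | p c}.ncard ↔ p c := by
  constructor
  · intro hc
    by_contra hpc
    have hsub : {c | p c} ⊆ Set.Iio c := fun c' hc' => not_le.mp fun hcc' => hpc (hp hcc' hc')
    have := Set.ncard_le_ncard hsub (Set.finite_Iio c)
    rw [← Finset.coe_Iio, Set.ncard_coe_finset, Nat.card_Iio] at this
    omega
  · intro hpc
    have hsub : Set.Iic c ⊆ {c | p c} := fun c' hc' => hp hc' hpc
    have := Set.ncard_le_ncard hsub hfin
    rw [← Finset.coe_Iic, Set.ncard_coe_finset, Nat.card_Iic] at this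
    omega

theorem Set.eq_of_insert_sdiff_eq {α : Type*} {B C : Set α} {b c : α} (hbB : b ∈ B) (hbC : b ∈ C)
    (hcB : c ∉ B) (hcC : c ∉ C) (h : insert c (B \ {b}) = insert c (C \ {b})) : B = C := by
  have hdiff : B \ {b} = C \ {b} := by
    rw [← Set.insert_sdiff_self_of_notMem (a := c) (s := B \ {b}) fun hc => hcB hc.1,
      ← Set.insert_sdiff_self_of_notMem (a := c) (s := C \ {b}) fun hc => hcC hc.1, h]
  rw [← Set.insert_eq_of_mem hbB, ← Set.insert_sdiff_singleton, hdiff, Set.insert_sdiff_singleton,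
    Set.insert_eq_of_mem hbC]

def SelfComplementary (B : Set ℤ) : Prop := ∀ x, x ∈ B ↔ -1 - x ∉ B

namespace SelfComplementary

variable {B C : Set ℤ} {b b' s x : ℤ}

theorem notMem_insert_sub_sdiff (hB : SelfComplementary B) (hb : b ∈ B) (hbs : b - s ∉ B)
    (hsym : 2 * b ≠ s - 1) :
    b ∉ insert (b - s) (B \ {b}) ∧ -1 - b ∉ insert (b - s) (B \ {b}) ∧
      s - 1 - b ∈ insert (b - s) (B \ {b}) := by
  have hs : s ≠ 0 := by rintro rfl; simp_all
  have := hB b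
  have := hB (s - 1 - b)
  simp only [Set.mem_insert_iff, Set.mem_sdiff, Set.mem_singleton_iff]
  grind

theorem eq_or_eq_of_notMem_insert_sub_sdiff (hB : SelfComplementary B)
    (hx : x ∉ insert (b - s) (B \ {b})) (hx' : -1 - x ∉ insert (b - s) (B \ {b})) :
    x = b ∨ x = -1 - b := by
  have := hB x
  simp only [Set.mem_insert_iff, Set.mem_sdiff, Set.mem_singleton_iff] at hx hx'
  grind

theorem eq_or_eq_of_mem_insert_sub_sdiff (hB : SelfComplementary B)
    (hx : x ∈ insert (b - s) (B \ {b})) (hx' : -1 - x ∈ insert (b - s) (B \ {b})) :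
    x = b - s ∨ x = s - 1 - b := by
  have := hB x
  simp only [Set.mem_insert_iff, Set.mem_sdiff, Set.mem_singleton_iff] at hx hx'
  grind

theorem eq_of_insert_sub_sdiff_eq_of_two_mul_ne (hB : SelfComplementary B)
    (hC : SelfComplementary C) (hb : b ∈ B) (hbs : b - s ∉ B) (hsym : 2 * b ≠ s - 1)
    (h : insert (b - s) (B \ {b}) = insert (b' - s) (C \ {b'})) : b = b' := by
  have hs : s ≠ 0 := by rintro rfl; simp_all
  obtain ⟨hbS, hb'S, hsbS⟩ := hB.notMem_insert_sub_sdiff hb hbs hsym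
  rw [h] at hbS hb'S hsbS
  have hbb' := hC.eq_or_eq_of_notMem_insert_sub_sdiff hbS hb'S
  have hbsb's := hC.eq_or_eq_of_mem_insert_sub_sdiff (h ▸ Set.mem_insert (b - s) _)
    (by rwa [show -1 - (b - s) = s - 1 - b by ring])
  omega

theorem eq_of_insert_sub_sdiff_eq (hB : SelfComplementary B) (hC : SelfComplementary C)
    (hb : b ∈ B) (hbs : b - s ∉ B) (hb' : b' ∈ C) (hbs' : b' - s ∉ C)
    (h : insert (b - s) (B \ {b}) = insert (b' - s) (C \ {b'})) : b = b' := by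
  by_cases hsym : 2 * b = s - 1
  · by_cases hsym' : 2 * b' = s - 1
    · omega
    · exact (hC.eq_of_insert_sub_sdiff_eq_of_two_mul_ne hB hb' hbs' hsym' h.symm).symm
  · exact hB.eq_of_insert_sub_sdiff_eq_of_two_mul_ne hC hb hbs hsym h

end SelfComplementary

namespace SeqPartition

variable {l m : SeqPartition} {N : ℕ}

theorem parts_injective : Function.Injective parts := by
  rintro ⟨_, _⟩ ⟨_, _⟩ h
  simpa using h

theorem strictAnti_beta (l : SeqPartition) :
    StrictAnti fun r : ℕ => (l.parts r : ℤ) - (r + 1) := by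
  intro i j hij
  have := l.antitone hij.le
  simp only
  omega

theorem betaSet_injective : Function.Injective betaSet := by
  intro l m h
  have hlm := ((strictAnti_beta l).dual_right.range_inj (strictAnti_beta m).dual_right).mp h
  refine parts_injective (Finsupp.ext fun r => ?_)
  have := congrFun hlm r
  simp only [Function.comp_apply, OrderDual.toDual_inj] at this
  omega

theorem exists_parts_eq_zero (l : SeqPartition) : ∃ N, ∀ r, N ≤ r → l.parts r = 0 := by
  refine ⟨l.parts.support.sup id + 1, fun r hr => Finsupp.notMem_support_iff.mp fun hmem => ?_⟩
  have := Finset.le_sup (f := id) hmem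
  simp only [id] at this
  omega

theorem size_eq_sum_range (hN : ∀ r, N ≤ r → l.parts r = 0) :
    l.size = ∑ r ∈ Finset.range N, l.parts r := by
  refine Finsupp.sum_of_support_subset _ (fun r hr => ?_) _ fun _ _ => rfl
  by_contra hrN
  exact Finsupp.mem_support_iff.mp hr (hN r (by simpa using hrN))

def betaFinset (l : SeqPartition) (N : ℕ) : Finset ℤ :=
  (Finset.range N).image fun r => (l.parts r : ℤ) - (r + 1)

theorem coe_betaFinset (hN : ∀ r, N ≤ r → l.parts r = 0) :
    (l.betaFinset N : Set ℤ) = l.betaSet ∩ Set.Ici (-N) := by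
  ext x
  simp only [betaFinset, Finset.coe_image, Finset.coe_range, Set.mem_image, Set.mem_Iio, betaSet,
    Set.mem_inter_iff, Set.mem_range, Set.mem_Ici]
  constructor
  · rintro ⟨r, hr, rfl⟩
    exact ⟨⟨r, rfl⟩, by omega⟩
  · rintro ⟨⟨r, rfl⟩, hx⟩
    refine ⟨r, not_le.mp fun hr => ?_, rfl⟩
    have := hN r hr
    omega

theorem sum_betaFinset (hN : ∀ r, N ≤ r → l.parts r = 0) :
    ∑ x ∈ l.betaFinset N, x = l.size - ∑ r ∈ Finset.range N, ((r : ℤ) + 1) := by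
  rw [betaFinset, Finset.sum_image fun _ _ _ _ hij => (strictAnti_beta l).injective hij,
    size_eq_sum_range hN, Nat.cast_sum, Finset.sum_sub_distrib]

theorem RemoveHook.size_eq {h : ℕ} (hlm : RemoveHook h l m) : l.size = m.size + h := by
  obtain ⟨b, hb, hbh, hβ⟩ := hlm
  obtain ⟨Nl, hNl⟩ := exists_parts_eq_zero l
  obtain ⟨Nm, hNm⟩ := exists_parts_eq_zero m
  obtain ⟨N, hlN, hmN, hbN⟩ : ∃ N : ℕ, Nl ≤ N ∧ Nm ≤ N ∧ -(N : ℤ) ≤ b - h :=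
    ⟨Nl + Nm + b.natAbs + h, by omega, by omega, by omega⟩
  have hl : ∀ r, N ≤ r → l.parts r = 0 := fun r hr => hNl r (by omega)
  have hm : ∀ r, N ≤ r → m.parts r = 0 := fun r hr => hNm r (by omega)
  have hbl : b ∈ l.betaFinset N := by
    rw [← Finset.mem_coe, coe_betaFinset hl]
    exact ⟨hb, by simp only [Set.mem_Ici]; omega⟩
  have hbh' : b - h ∉ (l.betaFinset N).erase b := fun hmem => by
    rw [← Finset.mem_coe, Finset.coe_erase, coe_betaFinset hl] at hmem
    exact hbh hmem.1.1
  have hβN : m.betaFinset N = insert (b - h) ((l.betaFinset N).erase b) := by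
    apply Finset.coe_injective
    rw [coe_betaFinset hm, hβ, Finset.coe_insert, Finset.coe_erase, coe_betaFinset hl,
      Set.insert_inter_of_mem (by simpa using hbN), Set.inter_sdiff_right_comm]
  have hsum := sum_betaFinset hm
  rw [hβN, Finset.sum_insert hbh', Finset.sum_erase_eq_sub hbl, sum_betaFinset hl] at hsum
  omega

theorem size_le_of_reflTransGen {s : ℕ} (h : Relation.ReflTransGen (RemoveHook s) l m) :
    m.size ≤ l.size := by
  induction h with
  | refl => rfl
  | tail _ hstep ih => have := hstep.size_eq; omega

theorem removeHook_of_reflTransGen {s : ℕ} (hs : 0 < s)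
    (h : Relation.ReflTransGen (RemoveHook s) l m) (hsize : l.size = m.size + s) :
    RemoveHook s l m := by
  rcases h.cases_head with rfl | ⟨k, hlk, hkm⟩
  · omega
  rcases hkm.cases_head with rfl | ⟨k', hkk', hk'm⟩
  · exact hlk
  have := hlk.size_eq
  have := hkk'.size_eq
  have := size_le_of_reflTransGen hk'm
  omega

theorem IsConj.lt_parts_iff (h : IsConj l m) (r c : ℕ) : c < m.parts r ↔ r < l.parts c := by
  rw [h r]
  refine Nat.lt_ncard_setOf_iff (fun i j hij hj => hj.trans (l.antitone hij)) ?_ c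
  refine l.parts.support.finite_toSet.subset fun c (hc : r + 1 ≤ l.parts c) => ?_
  rw [Finset.mem_coe, Finsupp.mem_support_iff]
  omega

theorem IsConj.mem_betaSet_iff (h : IsConj l m) (x : ℤ) :
    x ∈ m.betaSet ↔ -1 - x ∉ l.betaSet := by
  simp only [betaSet, Set.mem_range, not_exists]
  constructor
  · rintro ⟨r, rfl⟩ c hc
    have := h.lt_parts_iff r c
    omega
  · intro hx
    have hex : ∃ c : ℕ, x < c - l.parts c := by
      refine ⟨(x + l.parts 0 + 1).toNat, ?_⟩
      have := l.antitone (Nat.zero_le (x + l.parts 0 + 1).toNat)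
      omega
    classical
    -- `c` is the first column with `c - l_c > x`; row `c - x - 1` of `m` has length exactly `c`
    obtain ⟨c, hc, hmin⟩ : ∃ c : ℕ, x < c - l.parts c ∧ ∀ c' < c, ¬ x < c' - l.parts c' :=
      ⟨Nat.find hex, Nat.find_spec hex, fun _ => Nat.find_min hex⟩
    refine ⟨(c - x - 1).toNat, ?_⟩
    have hle : m.parts (c - x - 1).toNat ≤ c := not_lt.mp fun hlt => by
      have := (h.lt_parts_iff _ _).mp hlt
      omega
    have hge : c ≤ m.parts (c - x - 1).toNat := by
      rcases Nat.eq_zero_or_pos c with hc0 | hc0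
      · omega
      have := hmin (c - 1) (by omega)
      have := hx (c - 1)
      have := (h.lt_parts_iff (c - x - 1).toNat (c - 1)).mpr (by omega)
      omega
    omega

end SeqPartition

theorem stmt5_general (s : ℕ) (hs : 0 < s) (σ : SeqPartition)
    (l m : SeqPartition)
    (hl : SeqPartition.HasCore s l σ) (hlsc : SeqPartition.IsConj l l)
    (hlw : l.size = σ.size + s)
    (hm : SeqPartition.HasCore s m σ) (hmsc : SeqPartition.IsConj m m)
    (hmw : m.size = σ.size + s) :
    l = m := by
  obtain ⟨b, hb, hbs, hσl⟩ := SeqPartition.removeHook_of_reflTransGen hs hl.1 hlw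
  obtain ⟨b', hb', hbs', hσm⟩ := SeqPartition.removeHook_of_reflTransGen hs hm.1 hmw
  have hlm := hσl.symm.trans hσm
  obtain rfl : b = b' := SelfComplementary.eq_of_insert_sub_sdiff_eq
    hlsc.mem_betaSet_iff hmsc.mem_betaSet_iff hb hbs hb' hbs' hlm
  exact SeqPartition.betaSet_injective (Set.eq_of_insert_sdiff_eq hb hb' hbs hbs' hlm)

/-- at most one self-conjugate partition with `s`-core `σ` and
`s`-weight `1`. -/
theorem stmt5 (s : ℕ) (hs : 0 < s) (σ : SeqPartition) (hσ : SeqPartition.IsCore s σ)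
    (l m : SeqPartition)
    (hl : SeqPartition.HasCore s l σ) (hlsc : SeqPartition.IsConj l l)
    (hlw : l.size = σ.size + s)
    (hm : SeqPartition.HasCore s m σ) (hmsc : SeqPartition.IsConj m m)
    (hmw : m.size = σ.size + s) :
    l = m :=
  stmt5_general s hs σ l m hl hlsc hlw hm hmsc hmw
end

section
/- Let s, t be coprime integers greater than 1 and suppose σ and τ are both (s,t)-cores. If x is a peak for σ and τ, then x is a pinch-point for both σ and τ, i.e. L_x ⊆ β(σ), L_x ⊆ β(τ), β(σ) ∩ U_x = ∅ and β(τ) ∩ U_x = ∅. -/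
/-!
An `s`-core's beta-set is closed under `b ↦ b - s`: otherwise sliding the bead `b` down to the
empty position `b - s` would remove a rim `s`-hook. For an `(s,t)`-core this gives `L_x ⊆ β`
as soon as `x ∈ β`, and `β ∩ U_x = ∅` as soon as `x + s + t ∉ β`.

An `s`-core has charge zero, which reads `∑ j < s, m j / s = -s` for its class maxima `m j`;
hence `∑ j < s, δ j = 0`, and maximality of the partial sum at `k` forces
`δ k ≥ 0 ≥ δ (k + 1)`. The first inequality puts `x = mτ k` below `mσ k` in its class, so
`x ∈ β(σ)`. For the second, `mτ (k + 1) - t ∈ β(τ)` lies in the class of `x`, so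
`mσ (k + 1) ≤ mτ (k + 1) ≤ x + t`, while `x + s + t` lies in class `k + 1`.
-/

open Finset

theorem Set.range_update_of_injective {α β : Type*} [DecidableEq α] {g : α → β}
    (hg : Function.Injective g) (r : α) (v : β) :
    Set.range (Function.update g r v) = insert v (Set.range g \ {g r}) := by
  ext y
  simp only [Set.mem_range, Set.mem_insert_iff, Set.mem_sdiff, Set.mem_singleton_iff]
  constructor
  · rintro ⟨r', rfl⟩
    by_cases h : r' = r
    · simp [h]
    · exact .inr ⟨⟨r', (Function.update_of_ne h _ _).symm⟩,
        by rw [Function.update_of_ne h]; exact hg.ne h⟩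
  · rintro (rfl | ⟨⟨r', rfl⟩, hr'⟩)
    · exact ⟨r, Function.update_self _ _ _⟩
    · exact ⟨r', Function.update_of_ne (fun h => hr' (by rw [h])) _ _⟩

namespace SeqPartition

def beta (l : SeqPartition) (r : ℕ) : ℤ := l.parts r - (r + 1)

theorem betaSet_eq_range_beta (l : SeqPartition) : l.betaSet = Set.range l.beta := rfl

theorem strictAnti_beta_s13 (l : SeqPartition) : StrictAnti l.beta :=
  strictAnti_nat_of_succ_lt fun r => by
    have := l.antitone (Nat.le_add_right r 1)
    simp only [beta]
    omega

theorem exists_beta_eq_of_ge (l : SeqPartition) :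
    ∃ M : ℕ, ∀ r, M ≤ r → l.beta r = -r - 1 := by
  refine ⟨l.parts.support.sup id + 1, fun r hr => ?_⟩
  have hr' : r ∉ l.parts.support := fun hmem => by
    have := Finset.le_sup (f := id) hmem
    simp only [id] at this
    omega
  rw [beta, Finsupp.notMem_support_iff.mp hr']
  push_cast
  ring

/-- Sliding a bead of the abacus one step down into an empty position removes one box. -/
theorem exists_betaSet_eq_insert_sub_one_diff {l : SeqPartition} {b : ℤ} (hb : b ∈ l.betaSet)
    (hb' : b - 1 ∉ l.betaSet) :
    ∃ m : SeqPartition, m.betaSet = insert (b - 1) (l.betaSet \ {b}) := by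
  classical
  rw [betaSet_eq_range_beta] at hb hb' ⊢
  obtain ⟨r, rfl⟩ := hb
  have hnext : l.beta (r + 1) < l.beta r - 1 :=
    lt_of_le_of_ne (by have := l.strictAnti_beta_s13 (Nat.lt_add_one r); omega)
      fun h => hb' ⟨r + 1, h⟩
  have hpos : 0 < l.parts r := by
    have := l.antitone (Nat.le_add_right r 1)
    simp only [beta] at hnext
    omega
  refine ⟨⟨l.parts.update r (l.parts r - 1), fun i j hij => ?_⟩, ?_⟩
  · have hr := l.antitone (Nat.le_add_right r 1)
    have hij' := l.antitone hij
    simp only [beta] at hnext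
    simp only [Finsupp.update_apply]
    split_ifs with hjr hir hir'
    · exact le_rfl
    · subst hjr
      omega
    · subst hir'
      have := l.antitone (show i + 1 ≤ j by omega)
      omega
    · exact hij'
  · rw [betaSet_eq_range_beta, ← Set.range_update_of_injective l.strictAnti_beta_s13.injective]
    refine congrArg Set.range (funext fun i => ?_)
    simp only [Finsupp.coe_update, Function.update_apply, beta]
    split_ifs with h
    · subst h
      omega
    · rfl

theorem exists_betaSet_eq_insert_diff {l : SeqPartition} {b c : ℤ} (hb : b ∈ l.betaSet)
    (hc : c ∉ l.betaSet) (hcb : c < b) :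
    ∃ m : SeqPartition, m.betaSet = insert c (l.betaSet \ {b}) := by
  obtain ⟨n, hn⟩ : ∃ n : ℕ, b - c = n + 1 := ⟨(b - c - 1).toNat, by omega⟩
  induction n generalizing l b with
  | zero =>
    rw [show c = b - 1 by omega] at hc ⊢
    exact exists_betaSet_eq_insert_sub_one_diff hb hc
  | succ n ih =>
    -- if `b - 1` is occupied, first move that bead to `c`; otherwise first move `b` to `b - 1`
    by_cases hb' : b - 1 ∈ l.betaSet
    · obtain ⟨m, hm⟩ := ih (b := b - 1) hb' hc (by omega) (by omega)
      obtain ⟨m', hm'⟩ := exists_betaSet_eq_insert_sub_one_diff (l := m) (b := b)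
        (by rw [hm]; grind) (by rw [hm]; grind)
      exact ⟨m', by rw [hm', hm]; grind⟩
    · obtain ⟨m, hm⟩ := exists_betaSet_eq_insert_sub_one_diff hb hb'
      obtain ⟨m', hm'⟩ := ih (l := m) (b := b - 1) (by rw [hm]; grind) (by rw [hm]; grind)
        (by omega) (by omega)
      exact ⟨m', by rw [hm', hm]; grind⟩

end SeqPartition

namespace SeqPartition

theorem IsCore.sub_mem {s : ℕ} {l : SeqPartition} (hl : IsCore s l) {b : ℤ}
    (hb : b ∈ l.betaSet) : b - s ∈ l.betaSet := by
  by_contra hbs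
  have hs : 0 < s := Nat.pos_of_ne_zero fun h => hbs (by simpa [h] using hb)
  obtain ⟨m, hm⟩ := exists_betaSet_eq_insert_diff hb hbs (by omega)
  exact hl m ⟨b, hb, hbs, hm⟩

theorem IsCore.sub_mul_mem {s : ℕ} {l : SeqPartition} (hl : IsCore s l) {b : ℤ}
    (hb : b ∈ l.betaSet) (a : ℕ) : b - a * s ∈ l.betaSet := by
  induction a with
  | zero => simpa using hb
  | succ a ih => simpa [add_mul, sub_add_eq_sub_sub] using hl.sub_mem ih

theorem IsCore.mem_of_le_of_dvd {s : ℕ} {l : SeqPartition} (hl : IsCore s l) {b c : ℤ}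
    (hb : b ∈ l.betaSet) (hcb : c ≤ b) (hdvd : (s : ℤ) ∣ b - c) : c ∈ l.betaSet := by
  obtain ⟨a, ha⟩ := hdvd
  rcases Nat.eq_zero_or_pos s with rfl | hs
  · obtain rfl : b = c := sub_eq_zero.mp (by simpa using ha)
    exact hb
  · lift a to ℕ using by nlinarith
    obtain rfl : c = b - a * s := by linarith
    exact hl.sub_mul_mem hb a

theorem mem_image_beta_range_iff {l : SeqPartition} {M N : ℕ}
    (hM : ∀ r, M ≤ r → l.beta r = -r - 1) (hMN : M ≤ N) {y : ℤ} :
    y ∈ (range N).image l.beta ↔ y ∈ l.betaSet ∧ -(N : ℤ) ≤ y := by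
  simp only [mem_image, mem_range, betaSet_eq_range_beta, Set.mem_range]
  constructor
  · rintro ⟨r, hr, rfl⟩
    exact ⟨⟨r, rfl⟩, by simp only [beta]; omega⟩
  · rintro ⟨⟨r, rfl⟩, hy⟩
    refine ⟨r, ?_, rfl⟩
    by_contra h
    have := hM r (by omega)
    omega

theorem IsCore.mem_image_sub_mul_iff {s : ℕ} (hs : 0 < s) {l : SeqPartition} (hl : IsCore s l)
    {e m : ℤ} (hm : IsGreatest {b ∈ l.betaSet | (s : ℤ) ∣ b - e} m) (N : ℤ) {y : ℤ} :
    y ∈ (range ((m + N) / s + 1).toNat).image (fun a : ℕ => m - a * s) ↔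
      (y ∈ l.betaSet ∧ -N ≤ y) ∧ (s : ℤ) ∣ y - e := by
  have hsZ : (0 : ℤ) < s := by exact_mod_cast hs
  simp only [mem_image, mem_range]
  constructor
  · rintro ⟨a, ha, rfl⟩
    have : (a : ℤ) * s ≤ m + N := (Int.le_ediv_iff_mul_le hsZ).mp (by omega)
    refine ⟨⟨hl.sub_mul_mem hm.1.1 a, by linarith⟩, ?_⟩
    simpa [sub_right_comm] using dvd_sub hm.1.2 (dvd_mul_left (s : ℤ) a)
  · rintro ⟨⟨hy, hyN⟩, hye⟩
    obtain ⟨a, ha⟩ : (s : ℤ) ∣ m - y := by simpa using dvd_sub hm.1.2 hye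
    have hym := hm.2 ⟨hy, hye⟩
    lift a to ℕ using by nlinarith
    have : (a : ℤ) ≤ (m + N) / s := (Int.le_ediv_iff_mul_le hsZ).mpr (by linarith)
    exact ⟨a, by omega, by linarith⟩

/-- The charge of an `s`-core vanishes: counting the beads of the beta-set not below `-N`
class by class, each class contributes `m j / s + N / s + 1` of the `N` beads. -/
theorem IsCore.sum_ediv_classMax {s : ℕ} (hs : 0 < s) {l : SeqPartition} (hl : IsCore s l)
    {e m : ℕ → ℤ} (he : ∀ n : ℤ, ∃! j, j < s ∧ (s : ℤ) ∣ n - e j)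
    (hm : ∀ j < s, IsGreatest {b ∈ l.betaSet | (s : ℤ) ∣ b - e j} (m j)) :
    ∑ j ∈ range s, m j / s = -s := by
  classical
  obtain ⟨M, hM⟩ := l.exists_beta_eq_of_ge
  set N := s * (M + ∑ j ∈ range s, (m j).natAbs)
  have hN : M + ∑ j ∈ range s, (m j).natAbs ≤ N := Nat.le_mul_of_pos_left _ hs
  have hMN : M ≤ N := by omega
  have hmN : ∀ j < s, 0 ≤ m j + N := fun j hj => by
    have := single_le_sum (f := fun j => (m j).natAbs) (fun _ _ => Nat.zero_le _)
      (mem_range.mpr hj)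
    omega
  set piece : ℕ → Finset ℤ := fun j =>
    (range ((m j + N) / s + 1).toNat).image (fun a : ℕ => m j - a * s)
  have hwindow : (range N).image l.beta = (range s).biUnion piece := by
    ext y
    simp only [mem_biUnion, mem_range, piece]
    rw [mem_image_beta_range_iff hM hMN]
    constructor
    · intro hy
      obtain ⟨j, ⟨hj, hye⟩, -⟩ := he y
      exact ⟨j, hj, (hl.mem_image_sub_mul_iff hs (hm j hj) N).mpr ⟨hy, hye⟩⟩
    · rintro ⟨j, hj, hy⟩
      exact ((hl.mem_image_sub_mul_iff hs (hm j hj) N).mp hy).1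
  have hdisj : (range s : Set ℕ).PairwiseDisjoint piece := by
    intro i hi j hj hij
    refine disjoint_left.mpr fun y hyi hyj => hij ?_
    rw [coe_range, Set.mem_Iio] at hi hj
    exact (he y).unique ⟨hi, ((hl.mem_image_sub_mul_iff hs (hm i hi) N).mp hyi).2⟩
      ⟨hj, ((hl.mem_image_sub_mul_iff hs (hm j hj) N).mp hyj).2⟩
  have hcard := congrArg card hwindow
  rw [card_image_of_injective _ l.strictAnti_beta_s13.injective, card_range,
    card_biUnion hdisj] at hcard
  have hpiece : ∀ j < s, ((piece j).card : ℤ) = m j / s + N / s + 1 := fun j hj => by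
    rw [card_image_of_injective _ fun a b hab => by
      simpa [hs.ne'] using (sub_right_inj.mp hab : (a : ℤ) * s = b * s), card_range,
      ← Int.add_ediv_of_dvd_right (by simp [N])]
    have := Int.ediv_nonneg (hmN j hj) (Int.natCast_nonneg s)
    omega
  have hsum : (N : ℤ) = ∑ j ∈ range s, ((piece j).card : ℤ) := by exact_mod_cast hcard
  rw [sum_congr rfl fun j hj => hpiece j (mem_range.mp hj), sum_add_distrib, sum_add_distrib,
    sum_const, sum_const, card_range, nsmul_eq_mul, nsmul_eq_mul, mul_one] at hsum
  have : (s : ℤ) * (N / s) = N := Int.mul_ediv_cancel' (by simp [N])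
  linarith

end SeqPartition

theorem existsUnique_lt_dvd_sub_mul {s t : ℕ} (hs : 0 < s) (hst : s.Coprime t) (n : ℤ) :
    ∃! j : ℕ, j < s ∧ (s : ℤ) ∣ n - j * t := by
  have : NeZero s := ⟨hs.ne'⟩
  set u := ZMod.unitOfCoprime t hst.symm
  have hdvd_iff (j : ℕ) : (s : ℤ) ∣ n - j * t ↔ (n : ZMod s) * ↑u⁻¹ = j := by
    rw [← ZMod.intCast_eq_intCast_iff_dvd_sub, Units.mul_inv_eq_iff_eq_mul,
      ZMod.coe_unitOfCoprime, eq_comm]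
    push_cast
    rfl
  refine ⟨((n : ZMod s) * ↑u⁻¹).val, ⟨ZMod.val_lt _, ?_⟩, ?_⟩
  · rw [hdvd_iff, ZMod.natCast_zmod_val]
  · rintro j ⟨hj, hdvd⟩
    rw [(hdvd_iff j).mp hdvd, ZMod.val_natCast, Nat.mod_eq_of_lt hj]

section PartialSums

variable {α : Type*} [AddCommGroup α] [LinearOrder α] [IsOrderedAddMonoid α]
  {δ : ℕ → α} {s k : ℕ}

theorem nonneg_of_forall_partialSum_le (hk : k < s) (hsum : ∑ j ∈ range s, δ j = 0)
    (hmax : ∀ k' < s, ∑ j ∈ range (k' + 1), δ j ≤ ∑ j ∈ range (k + 1), δ j) :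
    0 ≤ δ k := by
  cases k with
  | zero => simpa [Nat.sub_add_cancel (by omega : 1 ≤ s), hsum] using hmax (s - 1) (by omega)
  | succ k => simpa [sum_range_succ _ (k + 1)] using hmax k (by omega)

theorem nonpos_succ_of_forall_partialSum_le (hk : k < s)
    (hsum : ∑ j ∈ range s, δ j = 0) (hper : δ s = δ 0)
    (hmax : ∀ k' < s, ∑ j ∈ range (k' + 1), δ j ≤ ∑ j ∈ range (k + 1), δ j) :
    δ (k + 1) ≤ 0 := by
  rcases (show k + 1 ≤ s from hk).lt_or_eq with hk1 | hk1
  · simpa [sum_range_succ _ (k + 1)] using hmax (k + 1) hk1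
  · rw [hk1, hper]
    simpa [hk1, hsum] using hmax 0 (by omega)

end PartialSums

namespace SeqPartition

variable {s t : ℕ} {l : SeqPartition}

theorem lowSet_subset_betaSet (hls : IsCore s l) (hlt : IsCore t l) {x : ℤ}
    (hx : x ∈ l.betaSet) : LowSet s t x ⊆ l.betaSet := by
  rintro _ ⟨a, b, rfl⟩
  exact hlt.sub_mul_mem (hls.sub_mul_mem hx a) b

theorem betaSet_inter_upSet_eq_empty (hls : IsCore s l) (hlt : IsCore t l) {x : ℤ}
    (hx : x + s + t ∉ l.betaSet) : l.betaSet ∩ UpSet s t x = ∅ := by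
  refine Set.eq_empty_of_forall_notMem ?_
  rintro _ ⟨hy, a, b, ha, hb, rfl⟩
  refine hx ?_
  convert hlt.sub_mul_mem (hls.sub_mul_mem hy (a - 1)) (b - 1) using 1
  push_cast [Nat.cast_sub ha, Nat.cast_sub hb]
  ring

theorem pinchPoint_of_mem_of_add_notMem (hls : IsCore s l) (hlt : IsCore t l) {x : ℤ}
    (hx : x ∈ l.betaSet) (hx' : x + s + t ∉ l.betaSet) : PinchPoint s t x l :=
  ⟨lowSet_subset_betaSet hls hlt hx, betaSet_inter_upSet_eq_empty hls hlt hx'⟩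

theorem IsCore.classMax_succ_le (hlt : IsCore t l) {j : ℕ} {m m' : ℤ}
    (hm : IsGreatest {b ∈ l.betaSet | (s : ℤ) ∣ b - j * t} m)
    (hm' : IsGreatest {b ∈ l.betaSet | (s : ℤ) ∣ b - (j + 1 : ℕ) * t} m') :
    m' ≤ m + t := by
  have := hm.2 ⟨hlt.sub_mem hm'.1.1, by simpa [add_mul, sub_sub, add_comm] using hm'.1.2⟩
  linarith

theorem classMax_self_eq_classMax_zero {m m₀ : ℤ}
    (hm : IsGreatest {b ∈ l.betaSet | (s : ℤ) ∣ b - (s : ℕ) * t} m)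
    (hm₀ : IsGreatest {b ∈ l.betaSet | (s : ℤ) ∣ b - (0 : ℕ) * t} m₀) : m = m₀ := by
  refine hm.unique ?_
  simpa [dvd_sub_left (dvd_mul_right (s : ℤ) t)] using hm₀

end SeqPartition

theorem stmt13_general (s t : ℕ) (hs : 1 < s) (hst : Nat.Coprime s t)
    (σ τ : SeqPartition)
    (hσs : SeqPartition.IsCore s σ) (hσt : SeqPartition.IsCore t σ)
    (hτs : SeqPartition.IsCore s τ) (hτt : SeqPartition.IsCore t τ)
    (mσ mτ δ : ℕ → ℤ)
    (hmσ : ∀ j : ℕ, IsGreatest {b ∈ σ.betaSet | (s : ℤ) ∣ (b - (j : ℤ) * t)} (mσ j))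
    (hmτ : ∀ j : ℕ, IsGreatest {b ∈ τ.betaSet | (s : ℤ) ∣ (b - (j : ℤ) * t)} (mτ j))
    (hδ : ∀ j : ℕ, (s : ℤ) * δ j = mσ j - mτ j)
    (k : ℕ) (hk : k < s)
    (hmax : ∀ k' : ℕ, k' < s →
      (∑ j ∈ Finset.range (k' + 1), δ j) ≤ ∑ j ∈ Finset.range (k + 1), δ j)
    (x : ℤ) (hx : x = mτ k) :
    PinchPoint s t x σ ∧ PinchPoint s t x τ := by
  have hs₀ : 0 < s := by omega
  have hδ' : ∀ j, δ j = mσ j / s - mτ j / s := fun j => by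
    rw [show mσ j = mτ j + s * δ j by linarith [hδ j], Int.add_mul_ediv_left _ _ (by omega)]
    ring
  have hclasses := existsUnique_lt_dvd_sub_mul hs₀ hst
  have hsum : ∑ j ∈ Finset.range s, δ j = 0 := by
    rw [Finset.sum_congr rfl fun j _ => hδ' j, Finset.sum_sub_distrib,
      hσs.sum_ediv_classMax hs₀ hclasses fun j _ => hmσ j,
      hτs.sum_ediv_classMax hs₀ hclasses fun j _ => hmτ j, sub_self]
  have hper : δ s = δ 0 := by
    rw [hδ', hδ', SeqPartition.classMax_self_eq_classMax_zero (hmσ s) (hmσ 0),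
      SeqPartition.classMax_self_eq_classMax_zero (hmτ s) (hmτ 0)]
  have hδk := nonneg_of_forall_partialSum_le hk hsum hmax
  have hδk' := nonpos_succ_of_forall_partialSum_le hk hsum hper hmax
  subst hx
  have hxσ : mτ k ∈ σ.betaSet :=
    hσs.mem_of_le_of_dvd (hmσ k).1.1 (by nlinarith [hδ k]) ⟨δ k, (hδ k).symm⟩
  have hτ' := hτt.classMax_succ_le (hmτ k) (hmτ (k + 1))
  have hσ' : mσ (k + 1) ≤ mτ k + t := by nlinarith [hδ (k + 1)]
  have hclass : (s : ℤ) ∣ mτ k + s + t - (k + 1 : ℕ) * t := by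
    obtain ⟨w, hw⟩ := (hmτ k).1.2
    exact ⟨w + 1, by push_cast; linarith⟩
  exact ⟨SeqPartition.pinchPoint_of_mem_of_add_notMem hσs hσt hxσ fun h => by
      linarith [(hmσ (k + 1)).2 ⟨h, hclass⟩],
    SeqPartition.pinchPoint_of_mem_of_add_notMem hτs hτt (hmτ k).1.1 fun h => by
      linarith [(hmτ (k + 1)).2 ⟨h, hclass⟩]⟩

/-- a peak for a pair of `(s,t)`-cores `σ, τ` is a pinch-point for
both.  Here `mσ j` and `mτ j` are the maxima of the beta-sets of `σ` and `τ` on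
the congruence class `jt mod s`, `δ j = (mσ j − mτ j)/s`, and `k` indexes a class
maximising the partial sums `δ 0 + δ 1 + ⋯ + δ k`; the peak is `x = mτ k`. -/
theorem stmt13 (s t : ℕ) (hs : 1 < s) (ht : 1 < t) (hst : Nat.Coprime s t)
    (σ τ : SeqPartition)
    (hσs : SeqPartition.IsCore s σ) (hσt : SeqPartition.IsCore t σ)
    (hτs : SeqPartition.IsCore s τ) (hτt : SeqPartition.IsCore t τ)
    (mσ mτ δ : ℕ → ℤ)
    (hmσ : ∀ j : ℕ, IsGreatest {b ∈ σ.betaSet | (s : ℤ) ∣ (b - (j : ℤ) * t)} (mσ j))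
    (hmτ : ∀ j : ℕ, IsGreatest {b ∈ τ.betaSet | (s : ℤ) ∣ (b - (j : ℤ) * t)} (mτ j))
    (hδ : ∀ j : ℕ, (s : ℤ) * δ j = mσ j - mτ j)
    (k : ℕ) (hk : k < s)
    (hmax : ∀ k' : ℕ, k' < s →
      (∑ j ∈ Finset.range (k' + 1), δ j) ≤ ∑ j ∈ Finset.range (k + 1), δ j)
    (x : ℤ) (hx : x = mτ k) :
    PinchPoint s t x σ ∧ PinchPoint s t x τ :=
  stmt13_general s t hs hst σ τ hσs hσt hτs hτt mσ mτ δ hmσ hmτ hδ k hk hmax x hx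
end
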